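/- Let U ∈ 𝒰 be differentiable on (0,π] and let V : (0,π] → ℝ be differentiable, and suppose there is C₀ > 0 such that 0 ≤ U'(t) ≤ C₀·h_U(t) and |V'(t)| ≤ C₀·h_U(t) for all t ∈ (0,π]. Define the curve z(t) := exp(−U(t) − iV(t)). Then there exists a constant C > 0 such that for every ε ∈ (0,π): the hyperbolic length ∫_ε^π 2|z'(t)|/(1 − |z(t)|²) dt ≤ C·∫_ε^π h_U(t)/U(t) dt. -/

import Mathlib

open MeasureTheory Filter Set Complex

noncomputable section

noncomputable def hU (U : ℝ → ℝ) (t : ℝ) : ℝ := ∫ x in t..Real.pi, U x / x ^ 2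

def ClassU (U : ℝ → ℝ) : Prop :=
  Continuous U ∧ (∀ t, U (-t) = U t) ∧ Function.Periodic U (2 * Real.pi) ∧
  U 0 = 0 ∧ MonotoneOn U (Set.Icc 0 Real.pi) ∧
  (∀ t, 0 < t → t ≤ Real.pi → 0 < U t) ∧
  Tendsto (fun t => hU U t) (nhdsWithin 0 (Set.Ioi 0)) atTop

/-!
Along the curve `z = exp (-U - iV)` one has `|z| = e^{-U}` and `|z'| = e^{-U} |U' + iV'|`, so the
Poincaré density is at most `2 (|U'| + |V'|) / (1 - e^{-2U})`. Since `1 - e^{-x} ≥ x e^{-x}` and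
`U ≤ U π` on `(0, π]`, the denominator is at least `2 U e^{-2 U π}`, and the hypotheses on `U'`
and `V'` bound the density pointwise by `2 C₀ e^{2 U π} h_U / U`; integrate over `[ε, π]`.
-/

namespace Real

theorem mul_exp_neg_le_one_sub_exp_neg {x : ℝ} : x * exp (-x) ≤ 1 - exp (-x) := by
  have h := add_one_le_exp x
  have hx : exp x * exp (-x) = 1 := by rw [← exp_add, add_neg_cancel, exp_zero]
  nlinarith [exp_pos (-x)]

end Real

theorem intervalIntegral_le_of_nonneg_of_le {f g : ℝ → ℝ} {a b : ℝ} (hab : a ≤ b)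
    (hg : IntervalIntegrable g volume a b) (hf : ∀ x ∈ Ioc a b, 0 ≤ f x)
    (hfg : ∀ x ∈ Ioc a b, f x ≤ g x) :
    ∫ x in a..b, f x ≤ ∫ x in a..b, g x := by
  rw [intervalIntegral.integral_of_le hab, intervalIntegral.integral_of_le hab]
  refine integral_mono_of_nonneg ?_ hg.1 ?_ <;> rw [EventuallyLE, ae_restrict_iff' measurableSet_Ioc]
  exacts [.of_forall hf, .of_forall hfg]

theorem hU_eq_neg_integral (U : ℝ → ℝ) :
    hU U = fun t => -∫ x in Real.pi..t, U x / x ^ 2 := by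
  funext t
  rw [hU, intervalIntegral.integral_symm]

theorem continuousOn_hU {U : ℝ → ℝ} (hcont : Continuous U) : ContinuousOn (hU U) (Ioi 0) := by
  have hf : ContinuousOn (fun x : ℝ => U x / x ^ 2) (Ioi 0) :=
    hcont.continuousOn.div (continuous_pow 2).continuousOn fun x hx => pow_ne_zero 2 (ne_of_gt hx)
  rw [hU_eq_neg_integral]
  refine fun t ht => (ContinuousAt.neg ?_).continuousWithinAt
  have hsub : uIcc Real.pi t ⊆ Ioi 0 := ordConnected_Ioi.uIcc_subset Real.pi_pos ht
  exact (intervalIntegral.integral_hasDerivAt_right ((hf.mono hsub).intervalIntegrable)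
    (hf.stronglyMeasurableAtFilter isOpen_Ioi t ht)
    (hf.continuousAt (isOpen_Ioi.mem_nhds ht))).continuousAt

theorem norm_cexp_neg_sub_I_mul (a b : ℝ) : ‖cexp (-(a : ℂ) - I * (b : ℂ))‖ = Real.exp (-a) := by
  rw [Complex.norm_exp]
  simp

theorem hasDerivAt_cexp_neg_sub_I_mul {U V : ℝ → ℝ} {u v t : ℝ} (hU : HasDerivAt U u t)
    (hV : HasDerivAt V v t) :
    HasDerivAt (fun s : ℝ => cexp (-(U s : ℂ) - I * (V s : ℂ)))
      (cexp (-(U t : ℂ) - I * (V t : ℂ)) * (-(u : ℂ) - I * (v : ℂ))) t :=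
  (hU.ofReal_comp.neg.sub (hV.ofReal_comp.const_mul I)).cexp

theorem poincareDensity_nonneg {U V : ℝ → ℝ} {t : ℝ} (ht : 0 ≤ U t) :
    0 ≤ 2 * ‖deriv (fun s : ℝ => cexp (-(U s : ℂ) - I * (V s : ℂ))) t‖ /
      (1 - ‖cexp (-(U t : ℂ) - I * (V t : ℂ))‖ ^ 2) := by
  have h : Real.exp (-U t) ≤ 1 := Real.exp_le_one_iff.2 (by linarith)
  rw [norm_cexp_neg_sub_I_mul]
  exact div_nonneg (by positivity) (by nlinarith [Real.exp_pos (-U t)])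

theorem poincareDensity_le {U V : ℝ → ℝ} {u v M t : ℝ} (hU : HasDerivAt U u t)
    (hV : HasDerivAt V v t) (ht : 0 < U t) (hM : U t ≤ M) :
    2 * ‖deriv (fun s : ℝ => cexp (-(U s : ℂ) - I * (V s : ℂ))) t‖ /
      (1 - ‖cexp (-(U t : ℂ) - I * (V t : ℂ))‖ ^ 2) ≤ Real.exp (2 * M) * (|u| + |v|) / U t := by
  rw [(hasDerivAt_cexp_neg_sub_I_mul hU hV).deriv, norm_mul, norm_cexp_neg_sub_I_mul]
  have hnum : Real.exp (-U t) * ‖-(u : ℂ) - I * (v : ℂ)‖ ≤ |u| + |v| := by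
    have hexp : Real.exp (-U t) ≤ 1 := Real.exp_le_one_iff.2 (by linarith)
    have hnorm : ‖-(u : ℂ) - I * (v : ℂ)‖ ≤ |u| + |v| := (norm_sub_le _ _).trans (by simp)
    nlinarith [norm_nonneg (-(u : ℂ) - I * (v : ℂ))]
  have hden : 2 * U t * Real.exp (-(2 * M)) ≤ 1 - Real.exp (-U t) ^ 2 :=
    calc 2 * U t * Real.exp (-(2 * M)) ≤ 2 * U t * Real.exp (-(2 * U t)) := by
          gcongr
      _ ≤ 1 - Real.exp (-(2 * U t)) := Real.mul_exp_neg_le_one_sub_exp_neg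
      _ = 1 - Real.exp (-U t) ^ 2 := by rw [← Real.exp_nat_mul]; ring_nf
  calc 2 * (Real.exp (-U t) * ‖-(u : ℂ) - I * (v : ℂ)‖) / (1 - Real.exp (-U t) ^ 2)
      ≤ 2 * (|u| + |v|) / (2 * U t * Real.exp (-(2 * M))) :=
        div_le_div₀ (by positivity) (by linarith) (by positivity) hden
    _ = Real.exp (2 * M) * (|u| + |v|) / U t := by
        rw [Real.exp_neg]; field_simp

theorem stmt13 (U U' V V' : ℝ → ℝ) (hU_mem : ClassU U)
    (hUderiv : ∀ t ∈ Set.Ioc (0 : ℝ) Real.pi, HasDerivAt U (U' t) t)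
    (hVderiv : ∀ t ∈ Set.Ioc (0 : ℝ) Real.pi, HasDerivAt V (V' t) t)
    (C₀ : ℝ) (hC₀ : 0 < C₀)
    (hbound : ∀ t ∈ Set.Ioc (0 : ℝ) Real.pi,
      0 ≤ U' t ∧ U' t ≤ C₀ * hU U t ∧ |V' t| ≤ C₀ * hU U t) :
    ∃ C : ℝ, 0 < C ∧ ∀ ε : ℝ, 0 < ε → ε < Real.pi →
      (∫ t in ε..Real.pi,
          2 * ‖deriv (fun s : ℝ =>
              Complex.exp (-(U s : ℂ) - Complex.I * (V s : ℂ))) t‖ /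
            (1 - ‖Complex.exp (-(U t : ℂ) - Complex.I * (V t : ℂ))‖ ^ 2))
        ≤ C * ∫ t in ε..Real.pi, hU U t / U t := by
  obtain ⟨hcont, -, -, -, hmono, hpos, -⟩ := hU_mem
  refine ⟨2 * C₀ * Real.exp (2 * U Real.pi), by positivity, fun ε hε hεπ => ?_⟩
  have hmem : ∀ t ∈ Ioc ε Real.pi, t ∈ Ioc 0 Real.pi := fun t ht => ⟨hε.trans ht.1, ht.2⟩
  have hUpos : ∀ t ∈ Ioc ε Real.pi, 0 < U t := fun t ht => hpos t (hmem t ht).1 ht.2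
  rw [← intervalIntegral.integral_const_mul]
  refine intervalIntegral_le_of_nonneg_of_le hεπ.le ?_
    (fun t ht => poincareDensity_nonneg (hUpos t ht).le) fun t ht => ?_
  · have hIcc : ∀ t ∈ uIcc ε Real.pi, 0 < t ∧ t ≤ Real.pi := fun t ht => by
      rw [uIcc_of_le hεπ.le] at ht
      exact ⟨hε.trans_le ht.1, ht.2⟩
    exact (continuousOn_const.mul (((continuousOn_hU hcont).mono fun t ht => (hIcc t ht).1).div
      hcont.continuousOn fun t ht => (hpos t (hIcc t ht).1 (hIcc t ht).2).ne')).intervalIntegrable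
  · obtain ⟨hU'_nonneg, hU'_le, hV'_le⟩ := hbound t (hmem t ht)
    have hUt : U t ≤ U Real.pi := hmono ⟨(hmem t ht).1.le, ht.2⟩ ⟨Real.pi_pos.le, le_rfl⟩ ht.2
    calc _ ≤ Real.exp (2 * U Real.pi) * (|U' t| + |V' t|) / U t :=
          poincareDensity_le (hUderiv t (hmem t ht)) (hVderiv t (hmem t ht)) (hUpos t ht) hUt
      _ ≤ Real.exp (2 * U Real.pi) * (2 * (C₀ * hU U t)) / U t := by
          gcongr
          · exact (hUpos t ht).le
          · rw [abs_of_nonneg hU'_nonneg]; linarith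
      _ = 2 * C₀ * Real.exp (2 * U Real.pi) * (hU U t / U t) := by ring

end
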